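/- Let A and B be C*-algebras and let f : A → B be a mapping with f(0) = 0 for which there exists a constant θ ≥ 0 such that ‖f((μb−a)/3) + f((a−3c)/3) + μ·f((3a−b)/3 + c) − f(a) + f(c²) − f(c)²‖ ≤ θ and ‖f(a*) − f(a)*‖ ≤ θ for all a, b, c ∈ A and all μ ∈ 𝕋¹. Then there exists a unique Jordan *-homomorphism h : A → B such that ‖f(a) − h(a)‖ ≤ θ for all a ∈ A. -/

import Mathlib

/-!
Putting `c = 0` shows that `f (3 • x)` is within `θ` of `3 • f x`, so the Hyers sequence
`3⁻ⁿ • f (3ⁿ • x)` converges to a map `h` with `‖f - h‖ ≤ θ / 2`. Each of the three defects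
(the additive one at `c = 0`, the Jordan one at `a = b = 0`, and the star one) is bounded and
scales like a geometric sequence along the Hyers sequence, so `h` satisfies them exactly.
The additive identity gives additivity and `h (μ • x) = μ • h x` for `|μ| = 1`, which together
give `ℂ`-linearity because every complex number is a natural number times a sum of two unit
complex numbers. Uniqueness holds because a linear map at bounded distance from another one is
equal to it.
-/

open Filter Topology

section HyersSequence

variable {𝕜 E F : Type*} [NormedField 𝕜] [AddCommGroup E] [Module 𝕜 E]
  [NormedAddCommGroup F] [NormedSpace 𝕜 F]

def hyersSeq (k : 𝕜) (g : E → F) (n : ℕ) (x : E) : F := (k ^ n)⁻¹ • g (k ^ n • x)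

@[simp]
lemma hyersSeq_zero (k : 𝕜) (g : E → F) (x : E) : hyersSeq k g 0 x = g x := by
  simp [hyersSeq]

lemma dist_hyersSeq_succ_le {k : 𝕜} (hk : k ≠ 0) {g : E → F} {θ : ℝ}
    (hg : ∀ x, ‖g (k • x) - k • g x‖ ≤ θ) (x : E) (n : ℕ) :
    dist (hyersSeq k g n x) (hyersSeq k g (n + 1) x) ≤ θ / ‖k‖ * ‖k‖⁻¹ ^ n := by
  have hsub : hyersSeq k g n x - hyersSeq k g (n + 1) x
      = -((k ^ (n + 1))⁻¹ • (g (k • k ^ n • x) - k • g (k ^ n • x))) := by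
    have e1 : (k ^ n)⁻¹ = (k ^ (n + 1))⁻¹ * k := by rw [pow_succ']; field_simp
    have e2 : k ^ (n + 1) • x = k • k ^ n • x := by rw [pow_succ', mul_smul]
    rw [hyersSeq, hyersSeq, e1, e2, mul_smul, ← smul_sub, ← smul_neg, neg_sub]
  rw [dist_eq_norm, hsub, norm_neg, norm_smul, norm_inv, norm_pow, pow_succ', mul_inv, ← inv_pow]
  calc ‖k‖⁻¹ * ‖k‖⁻¹ ^ n * ‖g (k • k ^ n • x) - k • g (k ^ n • x)‖
      ≤ ‖k‖⁻¹ * ‖k‖⁻¹ ^ n * θ := by gcongr; exact hg _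
    _ = θ / ‖k‖ * ‖k‖⁻¹ ^ n := by ring

lemma exists_tendsto_hyersSeq [CompleteSpace F] {k : 𝕜} (hk : 1 < ‖k‖) {g : E → F} {θ : ℝ}
    (hg : ∀ x, ‖g (k • x) - k • g x‖ ≤ θ) :
    ∃ L : E → F, ∀ x, Tendsto (fun n ↦ hyersSeq k g n x) atTop (𝓝 (L x)) ∧
      ‖g x - L x‖ ≤ θ / (‖k‖ - 1) := by
  have hk0 : k ≠ 0 := norm_pos_iff.mp (one_pos.trans hk)
  have hr : ‖k‖⁻¹ < 1 := inv_lt_one_of_one_lt₀ hk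
  have hstep := dist_hyersSeq_succ_le hk0 hg
  choose L hL using fun x ↦
    cauchySeq_tendsto_of_complete (cauchySeq_of_le_geometric _ _ hr (hstep x))
  refine ⟨L, fun x ↦ ⟨hL x, ?_⟩⟩
  have := dist_le_of_le_geometric_of_tendsto₀ _ _ hr (hstep x) (hL x)
  rw [hyersSeq_zero, dist_eq_norm] at this
  convert this using 1
  field_simp

lemma eq_zero_of_tendsto_of_eq_inv_pow_smul {k : 𝕜} (hk : 1 < ‖k‖) {u v : ℕ → F} {l : F}
    {θ : ℝ} (hu : Tendsto u atTop (𝓝 l)) (huv : ∀ n, u n = (k ^ n)⁻¹ • v n)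
    (hv : ∀ n, ‖v n‖ ≤ θ) : l = 0 := by
  refine tendsto_nhds_unique hu (squeeze_zero_norm (a := fun n ↦ θ * ‖k‖⁻¹ ^ n) (fun n ↦ ?_) ?_)
  · rw [huv, norm_smul, norm_inv, norm_pow, ← inv_pow, mul_comm]
    exact mul_le_mul_of_nonneg_right (hv n) (by positivity)
  · simpa using (tendsto_pow_atTop_nhds_zero_of_lt_one (by positivity)
      (inv_lt_one_of_one_lt₀ hk)).const_mul θ

end HyersSequence

lemma Complex.exists_norm_eq_one_add_eq {w : ℂ} (hw : ‖w‖ ≤ 2) :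
    ∃ μ ν : ℂ, ‖μ‖ = 1 ∧ ‖ν‖ = 1 ∧ μ + ν = w := by
  set α := Real.arccos (‖w‖ / 2)
  refine ⟨exp (↑(arg w + α) * I), exp (↑(arg w - α) * I), norm_exp_ofReal_mul_I _,
    norm_exp_ofReal_mul_I _, ?_⟩
  have hcos : Real.cos α = ‖w‖ / 2 :=
    Real.cos_arccos (by linarith [norm_nonneg w]) (by linarith)
  conv_rhs => rw [← norm_mul_exp_arg_mul_I w]
  have : exp (↑(arg w + α) * I) + exp (↑(arg w - α) * I)
      = exp (arg w * I) * (2 * Real.cos α) := by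
    push_cast
    simp only [exp_mul_I, cos_add, cos_sub, sin_add, sin_sub]
    ring
  rw [this, hcos]
  push_cast
  ring

section AdditiveDefect

variable {E F : Type*} [AddCommGroup E] [Module ℂ E] [AddCommGroup F] [Module ℂ F]

noncomputable def additiveDefect (h : E → F) (μ : ℂ) (a b : E) : F :=
  h ((3 : ℂ)⁻¹ • (μ • b - a)) + h ((3 : ℂ)⁻¹ • a) + μ • h ((3 : ℂ)⁻¹ • ((3 : ℂ) • a - b)) - h a

lemma additiveDefect_one_three_smul (h : E → F) (x y : E) :
    additiveDefect h 1 ((3 : ℂ) • y) ((3 : ℂ) • (x + y))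
      = h x + h y + h ((2 : ℂ) • y - x) - h ((3 : ℂ) • y) := by
  have e1 : (3 : ℂ)⁻¹ • ((1 : ℂ) • (3 : ℂ) • (x + y) - (3 : ℂ) • y) = x := by module
  have e2 : (3 : ℂ)⁻¹ • (3 : ℂ) • y = y := by module
  have e3 : (3 : ℂ)⁻¹ • ((3 : ℂ) • (3 : ℂ) • y - (3 : ℂ) • (x + y)) = (2 : ℂ) • y - x := by
    module
  rw [additiveDefect, e1, e2, e3, one_smul]

lemma additiveDefect_zero_three_smul (h : E → F) (μ : ℂ) (x : E) :
    additiveDefect h μ 0 ((3 : ℂ) • x) = h (μ • x) + μ • h (-x) := by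
  have e1 : (3 : ℂ)⁻¹ • (μ • (3 : ℂ) • x - 0) = μ • x := by module
  have e2 : (3 : ℂ)⁻¹ • ((3 : ℂ) • (0 : E) - (3 : ℂ) • x) = -x := by module
  rw [additiveDefect, e1, e2, smul_zero]
  abel

lemma map_add_of_additiveDefect_one_eq_zero {h : E → F} (hD : ∀ a b, additiveDefect h 1 a b = 0)
    (u v : E) : h (u + v) = h u + h v := by
  have hJ : ∀ x y, h x + h y + h ((2 : ℂ) • y - x) = h ((3 : ℂ) • y) := fun x y ↦ by
    rw [← sub_eq_zero, ← additiveDefect_one_three_smul, hD]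
  have h0 : h 0 = 0 := by
    have := hJ 0 0
    simp only [smul_zero, sub_zero] at this
    linear_combination (norm := module) (2 : ℂ)⁻¹ • this
  have h3 : ∀ y, h ((3 : ℂ) • y) = (3 : ℂ) • h y := fun y ↦ by
    rw [← hJ y y, show (2 : ℂ) • y - y = y by module]
    module
  have h2 : ∀ y, h ((2 : ℂ) • y) = (2 : ℂ) • h y := fun y ↦ by
    have := hJ 0 y
    rw [h0, zero_add, sub_zero, h3] at this
    rw [eq_sub_of_add_eq' this]
    module
  set y := (2 : ℂ)⁻¹ • (u + v)
  have := hJ u y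
  rw [show (2 : ℂ) • y - u = v by module, h3] at this
  rw [show u + v = (2 : ℂ) • y by module, h2]
  linear_combination (norm := module) -this

lemma isLinearMap_of_map_add_of_map_circle_smul {h : E → F}
    (hadd : ∀ u v, h (u + v) = h u + h v) (hcirc : ∀ μ : ℂ, ‖μ‖ = 1 → ∀ x, h (μ • x) = μ • h x) :
    IsLinearMap ℂ h := by
  refine ⟨hadd, fun z x ↦ ?_⟩
  obtain ⟨n, hn⟩ := exists_nat_gt ‖z‖
  have hn0 : (n : ℂ) ≠ 0 := by
    have : (0 : ℝ) < n := (norm_nonneg z).trans_lt hn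
    exact_mod_cast this.ne'
  obtain ⟨μ, ν, hμ, hν, hμν⟩ := Complex.exists_norm_eq_one_add_eq (w := z / n) (by
    rw [norm_div, Complex.norm_natCast, div_le_iff₀ ((norm_nonneg z).trans_lt hn)]
    linarith [norm_nonneg z])
  have hz : z = (n : ℂ) * (μ + ν) := by rw [hμν]; field_simp
  have hnat : ∀ y, h ((n : ℂ) • y) = (n : ℂ) • h y := fun y ↦ by
    simpa only [Nat.cast_smul_eq_nsmul, AddMonoidHom.mk'_apply]
      using (AddMonoidHom.mk' h hadd).map_nsmul n y
  rw [hz, mul_smul, hnat, add_smul, hadd, hcirc μ hμ, hcirc ν hν, ← add_smul, ← mul_smul]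

lemma isLinearMap_of_additiveDefect_eq_zero {h : E → F}
    (hD : ∀ μ : ℂ, ‖μ‖ = 1 → ∀ a b, additiveDefect h μ a b = 0) : IsLinearMap ℂ h := by
  have hadd := map_add_of_additiveDefect_one_eq_zero (hD 1 norm_one)
  refine isLinearMap_of_map_add_of_map_circle_smul hadd fun μ hμ x ↦ ?_
  have hneg : h (-x) = -h x := (AddMonoidHom.mk' h hadd).map_neg x
  have := hD μ hμ 0 ((3 : ℂ) • x)
  rwa [additiveDefect_zero_three_smul, hneg, smul_neg,
    ← sub_eq_add_neg, sub_eq_zero] at this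

end AdditiveDefect

section Transfer

variable {E F : Type*} [AddCommGroup E] [Module ℂ E] [NormedAddCommGroup F] [NormedSpace ℂ F]

lemma additiveDefect_hyersSeq (k : ℂ) (g : E → F) (n : ℕ) (μ : ℂ) (a b : E) :
    additiveDefect (hyersSeq k g n) μ a b
      = (k ^ n)⁻¹ • additiveDefect g μ (k ^ n • a) (k ^ n • b) := by
  have e1 : k ^ n • (3 : ℂ)⁻¹ • (μ • b - a) = (3 : ℂ)⁻¹ • (μ • k ^ n • b - k ^ n • a) := by
    module
  have e2 : k ^ n • (3 : ℂ)⁻¹ • a = (3 : ℂ)⁻¹ • k ^ n • a := by module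
  have e3 : k ^ n • (3 : ℂ)⁻¹ • ((3 : ℂ) • a - b)
      = (3 : ℂ)⁻¹ • ((3 : ℂ) • k ^ n • a - k ^ n • b) := by module
  simp only [additiveDefect, hyersSeq, e1, e2, e3]
  module

lemma additiveDefect_eq_zero_of_tendsto_hyersSeq {k : ℂ} (hk : 1 < ‖k‖) {g L : E → F}
    (hL : ∀ x, Tendsto (fun n ↦ hyersSeq k g n x) atTop (𝓝 (L x))) {μ : ℂ} {θ : ℝ}
    (hg : ∀ a b, ‖additiveDefect g μ a b‖ ≤ θ) (a b : E) : additiveDefect L μ a b = 0 :=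
  eq_zero_of_tendsto_of_eq_inv_pow_smul hk
    ((((hL _).add (hL _)).add ((hL _).const_smul μ)).sub (hL _))
    (additiveDefect_hyersSeq k g · μ a b) (fun _ ↦ hg _ _)

end Transfer

lemma map_sq_of_tendsto_hyersSeq {A B : Type*} [Ring A] [Algebra ℂ A] [NormedRing B]
    [NormedAlgebra ℂ B] {k : ℂ} (hk : 1 < ‖k‖) {g L : A → B}
    (hL : ∀ x, Tendsto (fun n ↦ hyersSeq k g n x) atTop (𝓝 (L x))) {θ : ℝ}
    (hg : ∀ c, ‖g (-c) + g c + g (c ^ 2) - g c ^ 2‖ ≤ θ) (c : A) : L (c ^ 2) = L c ^ 2 := by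
  have hk2 : 1 < ‖k ^ 2‖ := by rw [norm_pow]; exact one_lt_pow₀ hk two_ne_zero
  have hinv : Tendsto (fun n : ℕ ↦ (k ^ n)⁻¹) atTop (𝓝 0) := by
    simpa only [inv_pow] using tendsto_pow_atTop_nhds_zero_of_norm_lt_one (x := k⁻¹)
      (by rw [norm_inv]; exact inv_lt_one_of_one_lt₀ hk)
  have hL2 : Tendsto (fun n ↦ hyersSeq k g (2 * n) (c ^ 2)) atTop (𝓝 (L (c ^ 2))) :=
    (hL _).comp (tendsto_id.const_mul_atTop' two_pos)
  -- Scaling `c` by `k ^ n` scales the quadratic terms by `(k ^ 2) ^ n`, so the linear terms,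
  -- weighted by `(k ^ n)⁻¹`, disappear in the limit.
  have key := eq_zero_of_tendsto_of_eq_inv_pow_smul hk2
    ((((hinv.smul (hL (-c))).add (hinv.smul (hL c))).add hL2).sub ((hL c).pow 2))
    (v := fun n ↦ g (-(k ^ n • c)) + g (k ^ n • c) + g ((k ^ n • c) ^ 2) - g (k ^ n • c) ^ 2)
    (fun n ↦ by
      simp only [hyersSeq, smul_neg, smul_pow, ← pow_mul, smul_smul, ← mul_inv, mul_comm 2 n]
      module)
    (fun n ↦ hg _)
  simpa only [zero_smul, zero_add, sub_eq_zero] using key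

lemma map_star_of_tendsto_hyersSeq {E F : Type*} [AddCommGroup E] [Module ℂ E] [StarAddMonoid E]
    [StarModule ℂ E] [NormedAddCommGroup F] [NormedSpace ℂ F] [StarAddMonoid F] [StarModule ℂ F]
    [ContinuousStar F] {k : ℂ} (hk : 1 < ‖k‖) (hks : star k = k) {g L : E → F}
    (hL : ∀ x, Tendsto (fun n ↦ hyersSeq k g n x) atTop (𝓝 (L x))) {θ : ℝ}
    (hg : ∀ a, ‖g (star a) - star (g a)‖ ≤ θ) (a : E) : L (star a) = star (L a) := by
  have key := eq_zero_of_tendsto_of_eq_inv_pow_smul hk ((hL (star a)).sub (hL a).star)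
    (v := fun n ↦ g (star (k ^ n • a)) - star (g (k ^ n • a)))
    (fun n ↦ by simp only [hyersSeq, star_smul, star_inv₀, star_pow, hks, smul_sub])
    (fun n ↦ hg _)
  exact sub_eq_zero.mp key

section Specializations

variable {A B : Type*} [Ring A] [Algebra ℂ A] [Ring B] [Module ℂ B] [Norm B] {f : A → B} {θ : ℝ}

lemma norm_additiveDefect_le (hf0 : f 0 = 0)
    (hineq : ∀ μ : ℂ, ‖μ‖ = 1 → ∀ a b c : A,
      ‖f ((3:ℂ)⁻¹ • (μ • b - a)) + f ((3:ℂ)⁻¹ • (a - (3:ℂ) • c)) +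
        μ • f ((3:ℂ)⁻¹ • ((3:ℂ) • a - b) + c) - f a + f (c ^ 2) - (f c) ^ 2‖ ≤ θ)
    {μ : ℂ} (hμ : ‖μ‖ = 1) (a b : A) : ‖additiveDefect f μ a b‖ ≤ θ := by
  simpa [additiveDefect, hf0] using hineq μ hμ a b 0

lemma norm_map_neg_add_map_add_map_sq_sub_sq_le (hf0 : f 0 = 0)
    (hineq : ∀ μ : ℂ, ‖μ‖ = 1 → ∀ a b c : A,
      ‖f ((3:ℂ)⁻¹ • (μ • b - a)) + f ((3:ℂ)⁻¹ • (a - (3:ℂ) • c)) +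
        μ • f ((3:ℂ)⁻¹ • ((3:ℂ) • a - b) + c) - f a + f (c ^ 2) - (f c) ^ 2‖ ≤ θ)
    (c : A) : ‖f (-c) + f c + f (c ^ 2) - f c ^ 2‖ ≤ θ := by
  have e : (3 : ℂ)⁻¹ • ((0 : A) - (3 : ℂ) • c) = -c := by module
  simpa [e, hf0] using hineq 1 norm_one 0 0 c

end Specializations

lemma norm_map_three_smul_sub_le {E F : Type*} [AddCommGroup E] [Module ℂ E]
    [NormedAddCommGroup F] [Module ℂ F] {g : E → F} {θ : ℝ}
    (hg : ∀ a b, ‖additiveDefect g 1 a b‖ ≤ θ) (y : E) :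
    ‖g ((3 : ℂ) • y) - (3 : ℂ) • g y‖ ≤ θ := by
  have := hg ((3 : ℂ) • y) ((3 : ℂ) • (y + y))
  rwa [additiveDefect_one_three_smul, show (2 : ℂ) • y - y = y by module, ← norm_neg,
    show -(g y + g y + g y - g ((3 : ℂ) • y)) = g ((3 : ℂ) • y) - (3 : ℂ) • g y by module] at this

lemma eq_of_isLinearMap_of_norm_sub_le {𝕜 E F : Type*} [NontriviallyNormedField 𝕜]
    [AddCommGroup E] [Module 𝕜 E] [NormedAddCommGroup F] [NormedSpace 𝕜 F] {h h' : E → F}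
    (hh : IsLinearMap 𝕜 h) (hh' : IsLinearMap 𝕜 h') {C : ℝ} (hC : ∀ x, ‖h x - h' x‖ ≤ C) :
    h = h' := by
  funext x
  by_contra hne
  have hpos : 0 < ‖h x - h' x‖ := norm_pos_iff.mpr (sub_ne_zero.mpr hne)
  obtain ⟨c, hc⟩ := NormedField.exists_lt_norm 𝕜 (C / ‖h x - h' x‖)
  have := hC (c • x)
  rw [hh.map_smul, hh'.map_smul, ← smul_sub, norm_smul] at this
  rw [div_lt_iff₀ hpos] at hc
  linarith

theorem stmt_10_general
    {A B : Type*}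
    [NormedRing A] [StarRing A] [NormedAlgebra ℂ A] [StarModule ℂ A]
    [NormedRing B] [StarRing B] [CStarRing B] [NormedAlgebra ℂ B] [StarModule ℂ B]
    [CompleteSpace B]
    (f : A → B) (hf0 : f 0 = 0)
    (θ : ℝ)
    (hineq : ∀ μ : ℂ, ‖μ‖ = 1 → ∀ a b c : A,
      ‖f ((3:ℂ)⁻¹ • (μ • b - a)) + f ((3:ℂ)⁻¹ • (a - (3:ℂ) • c)) +
        μ • f ((3:ℂ)⁻¹ • ((3:ℂ) • a - b) + c) - f a + f (c ^ 2) - (f c) ^ 2‖ ≤ θ)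
    (hstar : ∀ a : A, ‖f (star a) - star (f a)‖ ≤ θ) :
    ∃! h : A → B,
      (IsLinearMap ℂ h ∧ (∀ a : A, h (a ^ 2) = (h a) ^ 2) ∧
        (∀ a : A, h (star a) = star (h a))) ∧
      ∀ a : A, ‖f a - h a‖ ≤ θ := by
  have hθ : 0 ≤ θ := (norm_nonneg _).trans (hstar 0)
  have h3 : (1 : ℝ) < ‖(3 : ℂ)‖ := by norm_num
  have hdefect := fun μ (hμ : ‖μ‖ = 1) ↦ norm_additiveDefect_le hf0 hineq hμ
  obtain ⟨h, hh⟩ := exists_tendsto_hyersSeq h3 (norm_map_three_smul_sub_le (hdefect 1 norm_one))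
  choose hlim hbound using hh
  have hlin : IsLinearMap ℂ h := isLinearMap_of_additiveDefect_eq_zero fun μ hμ ↦
    additiveDefect_eq_zero_of_tendsto_hyersSeq h3 hlim (hdefect μ hμ)
  have hclose : ∀ a, ‖f a - h a‖ ≤ θ := fun a ↦ (hbound a).trans (by norm_num; linarith)
  refine ⟨h, ⟨⟨hlin, map_sq_of_tendsto_hyersSeq h3 hlim
    (norm_map_neg_add_map_add_map_sq_sub_sq_le hf0 hineq),
    map_star_of_tendsto_hyersSeq h3 (by simp) hlim hstar⟩, hclose⟩, ?_⟩
  rintro h' ⟨⟨hlin', -, -⟩, hclose'⟩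
  refine eq_of_isLinearMap_of_norm_sub_le hlin' hlin (C := θ + θ) fun a ↦ ?_
  calc ‖h' a - h a‖ ≤ ‖h' a - f a‖ + ‖f a - h a‖ := norm_sub_le_norm_sub_add_norm_sub _ _ _
    _ ≤ θ + θ := by rw [norm_sub_rev]; exact add_le_add (hclose' a) (hclose a)

/-- Hyers–Ulam stability with constant bound `θ`. -/
theorem stmt_10
    {A B : Type*}
    [NormedRing A] [StarRing A] [CStarRing A] [NormedAlgebra ℂ A] [StarModule ℂ A]
    [CompleteSpace A]
    [NormedRing B] [StarRing B] [CStarRing B] [NormedAlgebra ℂ B] [StarModule ℂ B]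
    [CompleteSpace B]
    (f : A → B) (hf0 : f 0 = 0)
    (θ : ℝ) (hθ : 0 ≤ θ)
    (hineq : ∀ μ : ℂ, ‖μ‖ = 1 → ∀ a b c : A,
      ‖f ((3:ℂ)⁻¹ • (μ • b - a)) + f ((3:ℂ)⁻¹ • (a - (3:ℂ) • c)) +
        μ • f ((3:ℂ)⁻¹ • ((3:ℂ) • a - b) + c) - f a + f (c ^ 2) - (f c) ^ 2‖ ≤ θ)
    (hstar : ∀ a : A, ‖f (star a) - star (f a)‖ ≤ θ) :
    ∃! h : A → B,
      (IsLinearMap ℂ h ∧ (∀ a : A, h (a ^ 2) = (h a) ^ 2) ∧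
        (∀ a : A, h (star a) = star (h a))) ∧
      ∀ a : A, ‖f a - h a‖ ≤ θ :=
  stmt_10_general f hf0 θ hineq hstar
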